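/- arXiv:2002.07367 — 3 statements merged into one kernel-verified Lean document; each statement's English description precedes it below -/
import Mathlib

section
/- Let C ≥ 1/d and p ≥ 1. Then the distributional sliced-Wasserstein distance satisfies DSW_p(μ,ν;C) ≥ (1/d)^{1/p} · maxSW_p(μ,ν). -/
open MeasureTheory
open scoped ENNReal
noncomputable section

abbrev Euc (d : ℕ) := EuclideanSpace ℝ (Fin d)

/-- The set of couplings of two measures. -/
def couplings {X : Type*} [MeasurableSpace X] (μ ν : Measure X) : Set (Measure (X × X)) :=
  {π | π.map Prod.fst = μ ∧ π.map Prod.snd = ν}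

/-- `p`-th power of the `p`-Wasserstein distance. -/
def Wpp {X : Type*} [MeasurableSpace X] [PseudoMetricSpace X] (p : ℝ) (μ ν : Measure X) : ℝ≥0∞ :=
  ⨅ π ∈ couplings μ ν, ∫⁻ z, ENNReal.ofReal (dist z.1 z.2 ^ p) ∂π

/-- The `p`-Wasserstein distance. -/
def Wp {X : Type*} [MeasurableSpace X] [PseudoMetricSpace X] (p : ℝ) (μ ν : Measure X) : ℝ≥0∞ :=
  (Wpp p μ ν) ^ (1 / p)

/-- Projection onto direction `θ`. -/
def proj {d : ℕ} (θ : Euc d) (x : Euc d) : ℝ := (inner ℝ x θ : ℝ)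

/-- Pushforward of a measure under the projection onto `θ`. -/
def projMap {d : ℕ} (θ : Euc d) (μ : Measure (Euc d)) : Measure ℝ := μ.map (proj θ)

/-- Finite `p`-th moment. -/
def finiteMoment {d : ℕ} (p : ℝ) (μ : Measure (Euc d)) : Prop :=
  ∫⁻ x, ENNReal.ofReal (‖x‖ ^ p) ∂μ < ⊤

/-- The unit sphere in `ℝ^d`. -/
def Sph (d : ℕ) : Set (Euc d) := Metric.sphere 0 1

/-- Expected absolute pairwise cosine `E_{θ,θ'∼σ}[|⟨θ,θ'⟩|]`. -/
def cosExp {d : ℕ} (σ : Measure (Sph d)) : ℝ≥0∞ :=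
  ∫⁻ q, ENNReal.ofReal |(inner ℝ (q.1 : Euc d) (q.2 : Euc d) : ℝ)| ∂(σ.prod σ)

/-- The constraint set `M_C`. -/
def MC (d : ℕ) (C : ℝ) : Set (Measure (Sph d)) :=
  {σ | IsProbabilityMeasure σ ∧ cosExp σ ≤ ENNReal.ofReal C}

/-- Distributional sliced Wasserstein distance. -/
def DSW {d : ℕ} (p : ℝ) (C : ℝ) (μ ν : Measure (Euc d)) : ℝ≥0∞ :=
  ⨆ σ ∈ MC d C,
    (∫⁻ θ : Sph d, Wpp p (projMap (θ : Euc d) μ) (projMap (θ : Euc d) ν) ∂σ) ^ (1 / p)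

/-- Max sliced Wasserstein distance. -/
def maxSW {d : ℕ} (p : ℝ) (μ ν : Measure (Euc d)) : ℝ≥0∞ :=
  ⨆ θ ∈ Sph d, Wp p (projMap θ μ) (projMap θ ν)

/-- The uniform (normalized) probability measure on the unit sphere. -/
def unifSphere (d : ℕ) : Measure (Sph d) :=
  ((volume : Measure (Euc d)).toSphere Set.univ)⁻¹ • (volume : Measure (Euc d)).toSphere

/-- Sliced Wasserstein distance. -/
def SW {d : ℕ} (p : ℝ) (μ ν : Measure (Euc d)) : ℝ≥0∞ :=
  (∫⁻ θ : Sph d, Wpp p (projMap (θ : Euc d) μ) (projMap (θ : Euc d) ν) ∂(unifSphere d)) ^ (1 / p)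

/-! The normalised counting measure on an orthonormal basis through the optimal direction `θ*`
has expected absolute cosine exactly `1/d`, because distinct basis vectors are orthogonal, so it is
admissible for `DSW`; and its average of `W_p^p` over the basis is at least `1/d` times the term
at `θ*`, which is `maxSW_p^p`. -/

theorem exists_orthonormalBasis_apply_eq {𝕜 E ι : Type*} [RCLike 𝕜] [NormedAddCommGroup E]
    [InnerProductSpace 𝕜 E] [FiniteDimensional 𝕜 E] [Fintype ι]
    (hcard : Module.finrank 𝕜 E = Fintype.card ι) (i : ι) {θ : E} (hθ : ‖θ‖ = 1) :
    ∃ b : OrthonormalBasis ι 𝕜 E, b i = θ := by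
  have hθ' : Orthonormal 𝕜 (({i} : Set ι).domRestrict fun _ ↦ θ) :=
    ⟨fun _ ↦ hθ, fun j k hjk ↦ absurd (Subsingleton.elim j k) hjk⟩
  obtain ⟨b, hb⟩ := hθ'.exists_orthonormalBasis_extension_of_card_eq hcard
  exact ⟨b, hb i rfl⟩

namespace OrthonormalBasis

variable {E ι : Type*} [NormedAddCommGroup E] [InnerProductSpace ℝ E] [MeasurableSpace E]
  [BorelSpace E] [Fintype ι] (b : OrthonormalBasis ι ℝ E)

def toSphere (i : ι) : Metric.sphere (0 : E) 1 :=
  ⟨b i, by simp [b.orthonormal.1 i]⟩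

def uniformOnSphere : Measure (Metric.sphere (0 : E) 1) :=
  (Fintype.card ι : ℝ≥0∞)⁻¹ • ∑ i, Measure.dirac (b.toSphere i)

theorem lintegral_uniformOnSphere (f : Metric.sphere (0 : E) 1 → ℝ≥0∞) :
    ∫⁻ x, f x ∂b.uniformOnSphere = (Fintype.card ι : ℝ≥0∞)⁻¹ * ∑ i, f (b.toSphere i) := by
  simp [uniformOnSphere, lintegral_finsetSum_measure]

theorem inv_card_mul_le_lintegral_uniformOnSphere (f : Metric.sphere (0 : E) 1 → ℝ≥0∞) (i : ι) :
    (Fintype.card ι : ℝ≥0∞)⁻¹ * f (b.toSphere i) ≤ ∫⁻ x, f x ∂b.uniformOnSphere := by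
  rw [lintegral_uniformOnSphere]
  gcongr
  exact Finset.single_le_sum (f := fun j ↦ f (b.toSphere j)) (fun _ _ ↦ zero_le) (Finset.mem_univ i)

instance isProbabilityMeasure_uniformOnSphere [Nonempty ι] :
    IsProbabilityMeasure b.uniformOnSphere := by
  constructor
  simpa [ENNReal.inv_mul_cancel] using b.lintegral_uniformOnSphere 1

end OrthonormalBasis

theorem cosExp_uniformOnSphere {d : ℕ} {ι : Type*} [Fintype ι] [Nonempty ι]
    (b : OrthonormalBasis ι ℝ (Euc d)) :
    cosExp (b.uniformOnSphere : Measure (Sph d)) = (Fintype.card ι : ℝ≥0∞)⁻¹ := by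
  classical
  have hmeas : Measurable fun q : Metric.sphere (0 : Euc d) 1 × Metric.sphere (0 : Euc d) 1 ↦
      ENNReal.ofReal |(inner ℝ (q.1 : Euc d) (q.2 : Euc d) : ℝ)| := by
    fun_prop
  have hcos (i j : ι) : ENNReal.ofReal |(inner ℝ (b i) (b j) : ℝ)| = if i = j then 1 else 0 := by
    rw [b.inner_eq_ite]
    split_ifs <;> simp
  have hrow (i : ι) : ∫⁻ y : Metric.sphere (0 : Euc d) 1,
      ENNReal.ofReal |(inner ℝ (b i) (y : Euc d) : ℝ)| ∂b.uniformOnSphere =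
        (Fintype.card ι : ℝ≥0∞)⁻¹ := by
    simp [b.lintegral_uniformOnSphere, OrthonormalBasis.toSphere, hcos]
  unfold cosExp Sph
  rw [lintegral_prod _ hmeas.aemeasurable, b.lintegral_uniformOnSphere]
  simp [OrthonormalBasis.toSphere, hrow, ← mul_assoc, ENNReal.inv_mul_cancel]

theorem uniformOnSphere_mem_MC {d : ℕ} {C : ℝ} {ι : Type*} [Fintype ι] [Nonempty ι]
    (b : OrthonormalBasis ι ℝ (Euc d)) (hC : 1 / (Fintype.card ι : ℝ) ≤ C) :
    (b.uniformOnSphere : Measure (Sph d)) ∈ MC d C := by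
  refine ⟨b.isProbabilityMeasure_uniformOnSphere, ?_⟩
  rw [cosExp_uniformOnSphere, ← ENNReal.ofReal_natCast, ← ENNReal.ofReal_inv_of_pos (by positivity),
    ← one_div]
  exact ENNReal.ofReal_le_ofReal hC

theorem lintegral_Wpp_rpow_le_DSW {d : ℕ} {p C : ℝ} (μ ν : Measure (Euc d)) {σ : Measure (Sph d)}
    (hσ : σ ∈ MC d C) :
    (∫⁻ θ : Sph d, Wpp p (projMap (θ : Euc d) μ) (projMap (θ : Euc d) ν) ∂σ) ^ (1 / p) ≤
      DSW p C μ ν :=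
  le_iSup₂_of_le σ hσ le_rfl

theorem stmt5_general {d : ℕ} (hd : 1 ≤ d) (p C : ℝ) (hp : 1 ≤ p) (hC : 1 / (d : ℝ) ≤ C)
    (μ ν : Measure (Euc d))
    (hatt : ∃ θ ∈ Sph d, Wp p (projMap θ μ) (projMap θ ν) = maxSW p μ ν) :
    ENNReal.ofReal ((1 / (d : ℝ)) ^ (1 / p)) * maxSW p μ ν ≤ DSW p C μ ν := by
  obtain ⟨θ, hθ, hmax⟩ := hatt
  let i₀ : Fin d := ⟨0, hd⟩
  obtain ⟨b, hb⟩ := exists_orthonormalBasis_apply_eq (𝕜 := ℝ) (by simp) i₀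
    (mem_sphere_zero_iff_norm.mp hθ)
  have : Nonempty (Fin d) := ⟨i₀⟩
  have hσ : (b.uniformOnSphere : Measure (Sph d)) ∈ MC d C :=
    uniformOnSphere_mem_MC b (by simpa using hC)
  have hp₀ : 0 ≤ 1 / p := one_div_nonneg.mpr (by linarith)
  calc ENNReal.ofReal ((1 / (d : ℝ)) ^ (1 / p)) * maxSW p μ ν
      = ((d : ℝ≥0∞)⁻¹ * Wpp p (projMap θ μ) (projMap θ ν)) ^ (1 / p) := by
        rw [← hmax, Wp, ENNReal.mul_rpow_of_nonneg _ _ hp₀, ← ENNReal.ofReal_rpow_of_nonneg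
          (by positivity) hp₀, one_div, ENNReal.ofReal_inv_of_pos (by positivity),
          ENNReal.ofReal_natCast]
    _ ≤ (∫⁻ θ : Sph d, Wpp p (projMap (θ : Euc d) μ) (projMap (θ : Euc d) ν)
          ∂b.uniformOnSphere) ^ (1 / p) := by
        gcongr
        have h := b.inv_card_mul_le_lintegral_uniformOnSphere
          (fun θ ↦ Wpp p (projMap (θ : Euc d) μ) (projMap (θ : Euc d) ν)) i₀
        simp only [Fintype.card_fin, OrthonormalBasis.toSphere, hb] at h
        exact h
    _ ≤ DSW p C μ ν := lintegral_Wpp_rpow_le_DSW μ ν hσ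

theorem stmt5 {d : ℕ} (hd : 1 ≤ d) (p C : ℝ) (hp : 1 ≤ p) (hC : 1 / (d : ℝ) ≤ C)
    (μ ν : Measure (Euc d)) [IsProbabilityMeasure μ] [IsProbabilityMeasure ν]
    (hμ : finiteMoment p μ) (hν : finiteMoment p ν)
    (hatt : ∃ θ ∈ Sph d, Wp p (projMap θ μ) (projMap θ ν) = maxSW p μ ν) :
    ENNReal.ofReal ((1 / (d : ℝ)) ^ (1 / p)) * maxSW p μ ν ≤ DSW p C μ ν :=
  stmt5_general hd p C hp hC μ ν hatt
end
end

section
/- For any p ≥ 1 and admissible C > 0, the distributional sliced-Wasserstein distance satisfies the triangle inequality: DSW_p(μ_1, μ_2; C) ≤ DSW_p(μ_1, μ_3; C) + DSW_p(μ_3, μ_2; C) for all Borel probability measures μ_1, μ_2, μ_3 on R^d with finite p-th moments. -/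
open MeasureTheory
open scoped ENNReal
noncomputable section

/-! In each direction θ the triangle inequality for `W_p` on `ℝ` comes from gluing a coupling of
`(μ, κ)` with one of `(κ, ν)` along `κ` (disintegration), then applying Minkowski's inequality on
the glued measure to `|x - z| ≤ |x - y| + |y - z|`. Integrating over θ against σ, Minkowski's
inequality in `L^p(σ)` gives the triangle inequality for the σ-averaged sliced cost; taking the
supremum over `σ ∈ M_C` gives it for DSW. Minkowski in `L^p(σ)` needs θ ↦ `W_p(θ_#μ, θ_#ν)` to be
measurable: with finite `p`-th moments it is Lipschitz, because the coupling
`x ↦ (⟨x, θ⟩, ⟨x, θ'⟩)` gives `W_p(θ_#μ, θ'_#μ) ≤ |θ - θ'| ‖x‖_{L^p(μ)}`. -/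

open ProbabilityTheory

theorem ENNReal.lintegral_Lp_le_of_le_add {Ω : Type*} [MeasurableSpace Ω] {γ : Measure Ω}
    {p : ℝ} (hp : 1 ≤ p) {f g h : Ω → ℝ≥0∞} (hg : AEMeasurable g γ) (hh : AEMeasurable h γ)
    (hle : ∀ ω, f ω ≤ g ω + h ω) :
    (∫⁻ ω, f ω ^ p ∂γ) ^ (1 / p) ≤ (∫⁻ ω, g ω ^ p ∂γ) ^ (1 / p) + (∫⁻ ω, h ω ^ p ∂γ) ^ (1 / p) :=
  calc (∫⁻ ω, f ω ^ p ∂γ) ^ (1 / p) ≤ (∫⁻ ω, (g + h) ω ^ p ∂γ) ^ (1 / p) := by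
        have : 0 ≤ p := by linarith
        gcongr with ω
        exact hle ω
    _ ≤ _ := ENNReal.lintegral_Lp_add_le hg hh hp

theorem MeasureTheory.Measure.exists_gluing {X Y Z : Type*} [MeasurableSpace X]
    [MeasurableSpace Y] [MeasurableSpace Z] [StandardBorelSpace X] [Nonempty X]
    [StandardBorelSpace Z] [Nonempty Z] {π₁ : Measure (X × Y)} {π₂ : Measure (Y × Z)}
    [IsFiniteMeasure π₁] [IsFiniteMeasure π₂] (h : π₁.snd = π₂.fst) :
    ∃ γ : Measure (X × Y × Z), γ.map (fun w => (w.1, w.2.1)) = π₁ ∧ γ.map Prod.snd = π₂ := by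
  set ρ := π₁.map Prod.swap
  have hρ : ρ.fst = π₂.fst := by rw [Measure.fst_map_swap, h]
  set K := ρ.condKernel ×ₖ π₂.condKernel
  refine ⟨(π₂.fst ⊗ₘ K).map fun w => (w.2.1, w.1, w.2.2), ?_, ?_⟩
  · calc _ = ((π₂.fst ⊗ₘ K.map Prod.fst).map Prod.swap) := by
          rw [Measure.compProd_map measurable_fst, Measure.map_map (by fun_prop) (by fun_prop),
            Measure.map_map (by fun_prop) (by fun_prop)]
          rfl
      _ = π₁ := by
          rw [← Kernel.fst_eq, Kernel.fst_prod, ← hρ, Measure.disintegrate,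
            Measure.map_map measurable_swap measurable_swap, Prod.swap_swap_eq, Measure.map_id]
  · calc _ = π₂.fst ⊗ₘ K.map Prod.snd := by
          rw [Measure.compProd_map measurable_snd, Measure.map_map (by fun_prop) (by fun_prop)]
          rfl
      _ = π₂ := by rw [← Kernel.snd_eq, Kernel.snd_prod, Measure.disintegrate]

lemma ofReal_dist_rpow {X : Type*} [PseudoMetricSpace X] {p : ℝ} (hp : 0 ≤ p) (x y : X) :
    ENNReal.ofReal (dist x y ^ p) = edist x y ^ p := by
  rw [edist_dist, ENNReal.ofReal_rpow_of_nonneg dist_nonneg hp]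

section Wasserstein

variable {X : Type*} [MeasurableSpace X] {p : ℝ} {μ ν : Measure X}

lemma isFiniteMeasure_of_mem_couplings [IsFiniteMeasure μ] {π : Measure (X × X)}
    (hπ : π ∈ couplings μ ν) : IsFiniteMeasure π := by
  constructor
  rw [← Set.preimage_univ (f := Prod.fst), ← Measure.map_apply measurable_fst .univ, hπ.1]
  exact measure_lt_top μ _

variable [PseudoMetricSpace X]

lemma Wp_rpow (hp : p ≠ 0) (μ ν : Measure X) : Wp p μ ν ^ p = Wpp p μ ν := by
  rw [Wp, ← ENNReal.rpow_mul, one_div_mul_cancel hp, ENNReal.rpow_one]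

theorem Wp_eq_iInf (hp : 0 < p) (μ ν : Measure X) :
    Wp p μ ν = ⨅ π ∈ couplings μ ν, (∫⁻ z, edist z.1 z.2 ^ p ∂π) ^ (1 / p) := by
  simp only [Wp, Wpp, ofReal_dist_rpow hp.le]
  exact ((ENNReal.orderIsoRpow (1 / p) (by positivity)).map_iInf _).trans
    (iInf_congr fun π => (ENNReal.orderIsoRpow (1 / p) (by positivity)).map_iInf _)

theorem Wp_le_of_mem_couplings (hp : 0 < p) {π : Measure (X × X)} (hπ : π ∈ couplings μ ν) :
    Wp p μ ν ≤ (∫⁻ z, edist z.1 z.2 ^ p ∂π) ^ (1 / p) :=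
  (Wp_eq_iInf hp μ ν).trans_le (iInf₂_le π hπ)

theorem Wp_triangle [BorelSpace X] [SecondCountableTopology X] [StandardBorelSpace X]
    [Nonempty X] (hp : 1 ≤ p) (μ ν κ : Measure X) [IsFiniteMeasure μ] [IsFiniteMeasure κ] :
    Wp p μ ν ≤ Wp p μ κ + Wp p κ ν := by
  have hp₀ : 0 < p := by linarith
  rw [Wp_eq_iInf hp₀ μ κ, Wp_eq_iInf hp₀ κ ν, iInf_subtype', iInf_subtype']
  refine ENNReal.le_iInf_add_iInf fun ⟨π₁, h₁⟩ ⟨π₂, h₂⟩ => ?_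
  have := isFiniteMeasure_of_mem_couplings h₁
  have := isFiniteMeasure_of_mem_couplings h₂
  obtain ⟨γ, hγ₁, hγ₂⟩ := Measure.exists_gluing (h₁.2.trans h₂.1.symm)
  have hγ : γ.map (fun w => (w.1, w.2.2)) ∈ couplings μ ν := by
    constructor
    · rw [← h₁.1, ← hγ₁, Measure.map_map (by fun_prop) (by fun_prop),
        Measure.map_map (by fun_prop) (by fun_prop)]
      rfl
    · rw [← h₂.2, ← hγ₂, Measure.map_map (by fun_prop) (by fun_prop),
        Measure.map_map (by fun_prop) (by fun_prop)]
      rfl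
  calc Wp p μ ν ≤ (∫⁻ w, edist w.1 w.2.2 ^ p ∂γ) ^ (1 / p) := by
        simpa [lintegral_map (by fun_prop : Measurable fun z : X × X => edist z.1 z.2 ^ p)
          (by fun_prop : Measurable fun w : X × X × X => (w.1, w.2.2))]
          using Wp_le_of_mem_couplings hp₀ hγ
    _ ≤ (∫⁻ w, edist w.1 w.2.1 ^ p ∂γ) ^ (1 / p) + (∫⁻ w, edist w.2.1 w.2.2 ^ p ∂γ) ^ (1 / p) :=
        ENNReal.lintegral_Lp_le_of_le_add hp (by fun_prop) (by fun_prop)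
          fun w => edist_triangle _ _ _
    _ = _ := by
        dsimp only
        rw [← hγ₁, ← hγ₂, lintegral_map (by fun_prop) (by fun_prop),
          lintegral_map (by fun_prop) (by fun_prop)]

end Wasserstein

section Sliced

variable {d : ℕ} {p : ℝ}

instance (θ : Euc d) (μ : Measure (Euc d)) [IsFiniteMeasure μ] :
    IsFiniteMeasure (projMap θ μ) := by
  unfold projMap; infer_instance

lemma measurable_proj (θ : Euc d) : Measurable (proj θ) := by
  unfold proj; fun_prop

lemma edist_proj_le (θ θ' x : Euc d) :
    edist (proj θ x) (proj θ' x) ≤ edist θ θ' * ENNReal.ofReal ‖x‖ := by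
  rw [edist_dist, edist_dist, ← ENNReal.ofReal_mul dist_nonneg, Real.dist_eq, proj, proj,
    ← inner_sub_right, dist_eq_norm, mul_comm]
  exact ENNReal.ofReal_le_ofReal (abs_real_inner_le_norm _ _)

theorem Wp_projMap_le_edist_mul (hp : 0 < p) (μ : Measure (Euc d)) (θ θ' : Euc d) :
    Wp p (projMap θ μ) (projMap θ' μ)
      ≤ edist θ θ' * (∫⁻ x, ENNReal.ofReal (‖x‖ ^ p) ∂μ) ^ (1 / p) := by
  have hφ : Measurable fun x => (proj θ x, proj θ' x) :=
    (measurable_proj θ).prodMk (measurable_proj θ')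
  have hπ : μ.map (fun x => (proj θ x, proj θ' x)) ∈ couplings (projMap θ μ) (projMap θ' μ) :=
    ⟨Measure.map_map measurable_fst hφ, Measure.map_map measurable_snd hφ⟩
  calc Wp p (projMap θ μ) (projMap θ' μ)
      ≤ (∫⁻ x, edist (proj θ x) (proj θ' x) ^ p ∂μ) ^ (1 / p) := by
        simpa [lintegral_map (by fun_prop : Measurable fun z : ℝ × ℝ => edist z.1 z.2 ^ p) hφ]
          using Wp_le_of_mem_couplings hp hπ
    _ ≤ (∫⁻ x, edist θ θ' ^ p * ENNReal.ofReal (‖x‖ ^ p) ∂μ) ^ (1 / p) := by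
        gcongr with x
        rw [← ENNReal.ofReal_rpow_of_nonneg (norm_nonneg x) hp.le,
          ← ENNReal.mul_rpow_of_nonneg _ _ hp.le]
        gcongr
        exact edist_proj_le θ θ' x
    _ = _ := by
        rw [lintegral_const_mul' _ _ (by finiteness),
          ENNReal.mul_rpow_of_nonneg _ _ (by positivity), ← ENNReal.rpow_mul, mul_one_div_cancel hp.ne', ENNReal.rpow_one]

theorem continuous_Wp_projMap (hp : 1 ≤ p) {μ ν : Measure (Euc d)} [IsFiniteMeasure μ]
    [IsFiniteMeasure ν] (hμ : finiteMoment p μ) (hν : finiteMoment p ν) :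
    Continuous fun θ : Euc d => Wp p (projMap θ μ) (projMap θ ν) := by
  have hp₀ : 0 < p := by linarith
  set Mμ := (∫⁻ x, ENNReal.ofReal (‖x‖ ^ p) ∂μ) ^ (1 / p)
  set Mν := (∫⁻ x, ENNReal.ofReal (‖x‖ ^ p) ∂ν) ^ (1 / p)
  have hM : Mμ + Mν ≠ ⊤ := by
    have : 0 ≤ 1 / p := by positivity
    exact ENNReal.add_ne_top.2 ⟨ENNReal.rpow_ne_top_of_nonneg this hμ.ne,
      ENNReal.rpow_ne_top_of_nonneg this hν.ne⟩
  refine continuous_of_le_add_edist (Mμ + Mν) hM fun θ θ' => ?_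
  calc Wp p (projMap θ μ) (projMap θ ν)
      ≤ Wp p (projMap θ μ) (projMap θ' μ)
        + (Wp p (projMap θ' μ) (projMap θ' ν) + Wp p (projMap θ' ν) (projMap θ ν)) :=
        (Wp_triangle hp _ _ _).trans (add_le_add le_rfl (Wp_triangle hp _ _ _))
    _ ≤ edist θ θ' * Mμ + (Wp p (projMap θ' μ) (projMap θ' ν) + edist θ' θ * Mν) := by
        gcongr <;> exact Wp_projMap_le_edist_mul hp₀ _ _ _
    _ = _ := by rw [edist_comm θ' θ]; ring

theorem lintegral_Wpp_rpow_le_add (hp : 1 ≤ p) (σ : Measure (Sph d))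
    {μ₁ μ₂ μ₃ : Measure (Euc d)} [IsFiniteMeasure μ₁] [IsFiniteMeasure μ₂] [IsFiniteMeasure μ₃]
    (h₁ : finiteMoment p μ₁) (h₂ : finiteMoment p μ₂) (h₃ : finiteMoment p μ₃) :
    (∫⁻ θ : Sph d, Wpp p (projMap (θ : Euc d) μ₁) (projMap (θ : Euc d) μ₂) ∂σ) ^ (1 / p)
      ≤ (∫⁻ θ : Sph d, Wpp p (projMap (θ : Euc d) μ₁) (projMap (θ : Euc d) μ₃) ∂σ) ^ (1 / p)
        + (∫⁻ θ : Sph d, Wpp p (projMap (θ : Euc d) μ₃) (projMap (θ : Euc d) μ₂) ∂σ) ^ (1 / p) := by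
  have hp₀ : p ≠ 0 := by positivity
  simp only [← Wp_rpow hp₀]
  exact ENNReal.lintegral_Lp_le_of_le_add hp
    ((continuous_Wp_projMap hp h₁ h₃).measurable.comp measurable_subtype_coe).aemeasurable
    ((continuous_Wp_projMap hp h₃ h₂).measurable.comp measurable_subtype_coe).aemeasurable
    fun θ => Wp_triangle hp _ _ _

theorem le_DSW {C : ℝ} {σ : Measure (Sph d)} (hσ : σ ∈ MC d C) (μ ν : Measure (Euc d)) :
    (∫⁻ θ : Sph d, Wpp p (projMap (θ : Euc d) μ) (projMap (θ : Euc d) ν) ∂σ) ^ (1 / p)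
      ≤ DSW p C μ ν :=
  le_iSup₂ (f := fun σ (_ : σ ∈ MC d C) =>
    (∫⁻ θ : Sph d, Wpp p (projMap (θ : Euc d) μ) (projMap (θ : Euc d) ν) ∂σ) ^ (1 / p)) σ hσ

end Sliced

theorem stmt7_general {d : ℕ} (p C : ℝ) (hp : 1 ≤ p)
    (μ₁ μ₂ μ₃ : Measure (Euc d))
    [IsProbabilityMeasure μ₁] [IsProbabilityMeasure μ₂] [IsProbabilityMeasure μ₃]
    (h₁ : finiteMoment p μ₁) (h₂ : finiteMoment p μ₂) (h₃ : finiteMoment p μ₃) :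
    DSW p C μ₁ μ₂ ≤ DSW p C μ₁ μ₃ + DSW p C μ₃ μ₂ :=
  iSup₂_le fun σ hσ => (lintegral_Wpp_rpow_le_add hp σ h₁ h₂ h₃).trans <|
    add_le_add (le_DSW hσ μ₁ μ₃) (le_DSW hσ μ₃ μ₂)

theorem stmt7 {d : ℕ} (p C : ℝ) (hp : 1 ≤ p) (hC : 0 < C) (hMC : (MC d C).Nonempty)
    (μ₁ μ₂ μ₃ : Measure (Euc d))
    [IsProbabilityMeasure μ₁] [IsProbabilityMeasure μ₂] [IsProbabilityMeasure μ₃]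
    (h₁ : finiteMoment p μ₁) (h₂ : finiteMoment p μ₂) (h₃ : finiteMoment p μ₃) :
    DSW p C μ₁ μ₂ ≤ DSW p C μ₁ μ₃ + DSW p C μ₃ μ₂ :=
  stmt7_general p C hp μ₁ μ₂ μ₃ h₁ h₂ h₃
end
end

section
/- For one-dimensional probability measures μ and ν on R with finite p-th moments, the p-Wasserstein distance satisfies W_p(μ,ν) = ( ∫_0^1 |F_μ^{-1}(z) − F_ν^{-1}(z)|^p dz )^{1/p}, where F_μ^{-1} and F_ν^{-1} are the quantile functions (generalized inverses of the CDFs) of μ and ν. -/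
open MeasureTheory
open scoped ENNReal
noncomputable section

/-- The quantile function (generalized inverse CDF). -/
def quantile (μ : Measure ℝ) (z : ℝ) : ℝ := sInf {x | z ≤ (μ (Set.Iic x)).toReal}

open Set Filter ProbabilityTheory

/-!
A cost of the form `c q = m {(s, t) | q ∈ crossing s t}`, with `m` carried by `{s ≤ t}`, satisfies
`∫ c dπ = ∫ π (crossing s t) dm` by Tonelli. Every coupling `π` of `μ` and `ν` has
`π (crossing s t) ≥ (F_μ s - F_ν t) ⊔ (F_ν s - F_μ t)`, and for `s ≤ t` the quantile coupling
attains this bound, so it minimises every such cost. The cost `|x - y| ^ p` is of this form: for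
`p = 1` with `m` the Lebesgue measure on the diagonal, and for `p > 1` with `m` of density
`p (p - 1) (t - s) ^ (p - 2)` on `{s < t}`.
-/

instance : IsProbabilityMeasure (volume.restrict (Ioo (0 : ℝ) 1)) := ⟨by simp⟩

section Quantile

variable (μ : Measure ℝ) [IsProbabilityMeasure μ]

lemma quantile_eq_sInf_cdf (z : ℝ) : quantile μ z = sInf {x | z ≤ cdf μ x} := by
  simp [quantile, cdf_eq_real, measureReal_def]

lemma quantile_le_iff {z x : ℝ} (hz : z ∈ Ioo 0 1) : quantile μ z ≤ x ↔ z ≤ cdf μ x := by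
  have hne : {x | z ≤ cdf μ x}.Nonempty :=
    ((tendsto_cdf_atTop μ).eventually (eventually_ge_nhds hz.2)).exists
  have hbdd : BddBelow {x | z ≤ cdf μ x} := by
    obtain ⟨m, hm⟩ := ((tendsto_cdf_atBot μ).eventually (eventually_lt_nhds hz.1)).exists
    exact ⟨m, fun w hw => le_of_not_gt fun hwm => (hw.trans (monotone_cdf μ hwm.le)).not_gt hm⟩
  rw [quantile_eq_sInf_cdf]
  refine ⟨fun h => ?_, fun h => csInf_le hbdd h⟩
  rw [← (cdf μ).iInf_Ioi_eq x]
  refine le_ciInf fun r => ?_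
  obtain ⟨w, hw, hwr⟩ := exists_lt_of_csInf_lt hne (h.trans_lt r.2)
  exact hw.trans (monotone_cdf μ hwr.le)

lemma monotoneOn_quantile : MonotoneOn (quantile μ) (Ioo 0 1) := fun _ hz₁ _ hz₂ hz =>
  (quantile_le_iff μ hz₁).2 (hz.trans ((quantile_le_iff μ hz₂).1 le_rfl))

lemma aemeasurable_quantile : AEMeasurable (quantile μ) (volume.restrict (Ioo 0 1)) :=
  aemeasurable_restrict_of_monotoneOn measurableSet_Ioo (monotoneOn_quantile μ)

lemma map_quantile_volume_Ioo : (volume.restrict (Ioo 0 1)).map (quantile μ) = μ := by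
  have : IsProbabilityMeasure ((volume.restrict (Ioo (0 : ℝ) 1)).map (quantile μ)) :=
    Measure.isProbabilityMeasure_map (aemeasurable_quantile μ)
  refine Measure.ext_of_Iic _ _ fun x => ?_
  have hpre : quantile μ ⁻¹' Iic x ∩ Ioo 0 1 = Ioc 0 (cdf μ x) ∩ Ioo 0 1 := by
    ext z
    simp only [mem_inter_iff, mem_preimage, mem_Iic, mem_Ioc]
    exact ⟨fun ⟨h, hz⟩ => ⟨⟨hz.1, (quantile_le_iff μ hz).1 h⟩, hz⟩,
      fun ⟨h, hz⟩ => ⟨(quantile_le_iff μ hz).2 h.2, hz⟩⟩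
  rw [Measure.map_apply_of_aemeasurable (aemeasurable_quantile μ) measurableSet_Iic,
    Measure.restrict_apply' measurableSet_Ioo, hpre, ← ofReal_cdf,
    measure_congr ((ae_eq_refl _).inter Ioo_ae_eq_Ioc), Ioc_inter_Ioc,
    max_self, min_eq_left (cdf_le_one μ x), Real.volume_Ioc, sub_zero]

end Quantile

def quantileCoupling (μ ν : Measure ℝ) : Measure (ℝ × ℝ) :=
  (volume.restrict (Ioo 0 1)).map fun z => (quantile μ z, quantile ν z)

section QuantileCoupling

variable (μ ν : Measure ℝ) [IsProbabilityMeasure μ] [IsProbabilityMeasure ν]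

lemma aemeasurable_quantile_prod :
    AEMeasurable (fun z => (quantile μ z, quantile ν z)) (volume.restrict (Ioo 0 1)) :=
  (aemeasurable_quantile μ).prodMk (aemeasurable_quantile ν)

lemma quantileCoupling_mem_couplings : quantileCoupling μ ν ∈ couplings μ ν := by
  refine ⟨?_, ?_⟩ <;>
  rw [quantileCoupling, AEMeasurable.map_map_of_aemeasurable (by fun_prop)
    (aemeasurable_quantile_prod μ ν)]
  exacts [map_quantile_volume_Ioo μ, map_quantile_volume_Ioo ν]

lemma lintegral_quantileCoupling {c : ℝ × ℝ → ℝ≥0∞} (hc : Measurable c) :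
    ∫⁻ q, c q ∂quantileCoupling μ ν = ∫⁻ z in Ioo 0 1, c (quantile μ z, quantile ν z) :=
  lintegral_map' hc.aemeasurable (aemeasurable_quantile_prod μ ν)

end QuantileCoupling

lemma isProbabilityMeasure_of_mem_couplings {X : Type*} [MeasurableSpace X] {μ ν : Measure X}
    [IsProbabilityMeasure μ] {π : Measure (X × X)} (hπ : π ∈ couplings μ ν) :
    IsProbabilityMeasure π := by
  have : IsProbabilityMeasure (π.map Prod.fst) := hπ.1 ▸ inferInstance
  exact Measure.isProbabilityMeasure_of_map Prod.fst

def crossing (s t : ℝ) : Set (ℝ × ℝ) := {q | q.1 ≤ s ∧ t < q.2 ∨ q.2 ≤ s ∧ t < q.1}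

lemma measurableSet_crossing (s t : ℝ) : MeasurableSet (crossing s t) := by
  unfold crossing; measurability

lemma measurableSet_setOf_mem_crossing_prod :
    MeasurableSet {r : (ℝ × ℝ) × (ℝ × ℝ) | r.2 ∈ crossing r.1.1 r.1.2} := by
  unfold crossing; measurability

lemma measurableSet_setOf_mem_crossing (q : ℝ × ℝ) :
    MeasurableSet {st : ℝ × ℝ | q ∈ crossing st.1 st.2} := by
  unfold crossing; measurability

lemma swap_mem_crossing {q : ℝ × ℝ} {s t : ℝ} : q.swap ∈ crossing s t ↔ q ∈ crossing s t :=
  or_comm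

lemma mem_crossing_iff_of_le {x y s t : ℝ} (hxy : x ≤ y) (hst : s ≤ t) :
    (x, y) ∈ crossing s t ↔ x ≤ s ∧ t < y := by
  refine ⟨fun h => h.resolve_right fun h' => ?_, Or.inl⟩
  linarith [h'.1, h'.2]

section CrossingBounds

variable {μ ν : Measure ℝ}

lemma sub_le_measure_crossing {π : Measure (ℝ × ℝ)} (hπ : π ∈ couplings μ ν) (s t : ℝ) :
    (μ (Iic s) - ν (Iic t)) ⊔ (ν (Iic s) - μ (Iic t)) ≤ π (crossing s t) := by
  have hμ (x : ℝ) : μ (Iic x) = π (Prod.fst ⁻¹' Iic x) := by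
    rw [← hπ.1, Measure.map_apply measurable_fst measurableSet_Iic]
  have hν (x : ℝ) : ν (Iic x) = π (Prod.snd ⁻¹' Iic x) := by
    rw [← hπ.2, Measure.map_apply measurable_snd measurableSet_Iic]
  refine sup_le (tsub_le_iff_right.2 ?_) (tsub_le_iff_right.2 ?_) <;> rw [hμ, hν] <;>
    refine (measure_mono fun q (hq : _ ≤ s) => ?_).trans (measure_union_le _ _)
  · exact (lt_or_ge t q.2).imp (fun h => Or.inl ⟨hq, h⟩) id
  · exact (lt_or_ge t q.1).imp (fun h => Or.inr ⟨hq, h⟩) id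

variable [IsProbabilityMeasure μ] [IsProbabilityMeasure ν]

lemma ofReal_cdf_sub_cdf (x y : ℝ) :
    ENNReal.ofReal (cdf μ x - cdf ν y) = μ (Iic x) - ν (Iic y) := by
  rw [ENNReal.ofReal_sub _ (cdf_nonneg ν y), ofReal_cdf, ofReal_cdf]

lemma quantileCoupling_crossing_le {s t : ℝ} (hst : s ≤ t) :
    quantileCoupling μ ν (crossing s t) ≤ (μ (Iic s) - ν (Iic t)) ⊔ (ν (Iic s) - μ (Iic t)) := by
  have hsub : (fun z => (quantile μ z, quantile ν z)) ⁻¹' crossing s t ∩ Ioo 0 1 ⊆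
      Ioc (cdf ν t) (cdf μ s) ∪ Ioc (cdf μ t) (cdf ν s) := by
    rintro z ⟨hz | hz, hz01⟩
    · exact Or.inl ⟨lt_of_not_ge fun h => hz.2.not_ge ((quantile_le_iff ν hz01).2 h),
        (quantile_le_iff μ hz01).1 hz.1⟩
    · exact Or.inr ⟨lt_of_not_ge fun h => hz.2.not_ge ((quantile_le_iff μ hz01).2 h),
        (quantile_le_iff ν hz01).1 hz.1⟩
  rw [quantileCoupling, Measure.map_apply_of_aemeasurable (aemeasurable_quantile_prod μ ν)
    (measurableSet_crossing s t), Measure.restrict_apply' measurableSet_Ioo]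
  refine (measure_mono hsub).trans ?_
  by_cases h : cdf μ s ≤ cdf ν t
  · rw [Ioc_eq_empty h.not_gt, empty_union, Real.volume_Ioc, ofReal_cdf_sub_cdf]
    exact le_sup_right
  · have : ¬ cdf μ t < cdf ν s := by
      linarith [monotone_cdf μ hst, monotone_cdf ν hst]
    rw [Ioc_eq_empty this, union_empty, Real.volume_Ioc, ofReal_cdf_sub_cdf]
    exact le_sup_left

end CrossingBounds

lemma lintegral_measure_setOf_mem_crossing (m π : Measure (ℝ × ℝ)) [SFinite m] [SFinite π] :
    ∫⁻ q, m {st | q ∈ crossing st.1 st.2} ∂π = ∫⁻ st, π (crossing st.1 st.2) ∂m :=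
  (Measure.prod_apply_symm measurableSet_setOf_mem_crossing_prod).symm.trans
    (Measure.prod_apply measurableSet_setOf_mem_crossing_prod)

theorem lintegral_quantileCoupling_le {μ ν : Measure ℝ} [IsProbabilityMeasure μ]
    [IsProbabilityMeasure ν] {c : ℝ × ℝ → ℝ≥0∞} (m : Measure (ℝ × ℝ)) [SFinite m]
    (hm : ∀ᵐ st ∂m, st.1 ≤ st.2) (hc : ∀ q, m {st | q ∈ crossing st.1 st.2} = c q)
    {π : Measure (ℝ × ℝ)} (hπ : π ∈ couplings μ ν) :
    ∫⁻ q, c q ∂quantileCoupling μ ν ≤ ∫⁻ q, c q ∂π := by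
  have : IsProbabilityMeasure π := isProbabilityMeasure_of_mem_couplings hπ
  have : IsProbabilityMeasure (quantileCoupling μ ν) :=
    Measure.isProbabilityMeasure_map (aemeasurable_quantile_prod μ ν)
  simp only [← hc, lintegral_measure_setOf_mem_crossing]
  refine lintegral_mono_ae (hm.mono fun st hst => ?_)
  exact (quantileCoupling_crossing_le hst).trans (sub_le_measure_crossing hπ st.1 st.2)

lemma lintegral_Ioo_ofReal_mul_sub_rpow {a b q : ℝ} (hab : a ≤ b) (hq : 0 < q) :
    ∫⁻ t in Ioo a b, ENNReal.ofReal (q * (t - a) ^ (q - 1)) = ENNReal.ofReal ((b - a) ^ q) := by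
  have hint : IntervalIntegrable (fun t => (t - a) ^ (q - 1)) volume a b := by
    simpa using (intervalIntegral.intervalIntegrable_rpow' (by linarith) (a := 0)
      (b := b - a)).comp_sub_right a
  rw [← ofReal_integral_eq_lintegral_ofReal ((hint.1.mono_set Ioo_subset_Ioc_self).const_mul q)
      (ae_restrict_of_forall_mem measurableSet_Ioo fun t ht =>
        mul_nonneg hq.le (Real.rpow_nonneg (by linarith [ht.1]) _)),
    ← integral_Ioc_eq_integral_Ioo, ← intervalIntegral.integral_of_le hab,
    intervalIntegral.integral_const_mul, intervalIntegral.integral_comp_sub_right (· ^ (q - 1)),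
    sub_self, integral_rpow (Or.inl (by linarith)), sub_add_cancel, Real.zero_rpow hq.ne',
    sub_zero, mul_div_cancel₀ _ hq.ne']

lemma lintegral_Ioo_ofReal_mul_rsub_rpow {a b q : ℝ} (hab : a ≤ b) (hq : 0 < q) :
    ∫⁻ t in Ioo a b, ENNReal.ofReal (q * (b - t) ^ (q - 1)) = ENNReal.ofReal ((b - a) ^ q) := by
  have hint : IntervalIntegrable (fun t => (b - t) ^ (q - 1)) volume a b := by
    simpa using (intervalIntegral.intervalIntegrable_rpow' (by linarith) (a := b - a)
      (b := 0)).comp_sub_left b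
  rw [← ofReal_integral_eq_lintegral_ofReal ((hint.1.mono_set Ioo_subset_Ioc_self).const_mul q)
      (ae_restrict_of_forall_mem measurableSet_Ioo fun t ht =>
        mul_nonneg hq.le (Real.rpow_nonneg (by linarith [ht.2]) _)),
    ← integral_Ioc_eq_integral_Ioo, ← intervalIntegral.integral_of_le hab,
    intervalIntegral.integral_const_mul, intervalIntegral.integral_comp_sub_left (· ^ (q - 1)),
    sub_self, integral_rpow (Or.inl (by linarith)), sub_add_cancel, Real.zero_rpow hq.ne',
    sub_zero, mul_div_cancel₀ _ hq.ne']

lemma map_diag_volume_setOf_mem_crossing {x y : ℝ} (hxy : x ≤ y) :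
    (volume.map fun s : ℝ => (s, s)) {st | (x, y) ∈ crossing st.1 st.2} =
      ENNReal.ofReal (y - x) := by
  rw [Measure.map_apply (by fun_prop) (measurableSet_setOf_mem_crossing _), ← Real.volume_Ico]
  congr 1
  ext s
  exact (mem_crossing_iff_of_le hxy le_rfl).trans (and_congr_right fun _ => Iff.rfl)

lemma setOf_mem_crossing_inter_setOf_lt {x y : ℝ} (hxy : x ≤ y) :
    {st : ℝ × ℝ | (x, y) ∈ crossing st.1 st.2} ∩ {st | st.1 < st.2} =
      {st | x ≤ st.1 ∧ st.1 < st.2 ∧ st.2 < y} := by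
  ext st
  constructor
  · rintro ⟨h, hst⟩
    obtain ⟨hx, hy⟩ := (mem_crossing_iff_of_le hxy hst.le).1 h
    exact ⟨hx, hst, hy⟩
  · rintro ⟨hx, hst, hy⟩
    exact ⟨(mem_crossing_iff_of_le hxy hst.le).2 ⟨hx, hy⟩, hst⟩

lemma withDensity_setOf_mem_crossing {p x y : ℝ} (hp : 1 < p) (hxy : x ≤ y) :
    ((volume.restrict {st : ℝ × ℝ | st.1 < st.2}).withDensity
        fun st => ENNReal.ofReal (p * (p - 1) * (st.2 - st.1) ^ (p - 2)))
      {st | (x, y) ∈ crossing st.1 st.2} = ENNReal.ofReal ((y - x) ^ p) := by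
  set K : ℝ × ℝ → ℝ≥0∞ := fun st => ENNReal.ofReal (p * (p - 1) * (st.2 - st.1) ^ (p - 2))
  set T : Set (ℝ × ℝ) := {st | x ≤ st.1 ∧ st.1 < st.2 ∧ st.2 < y}
  have hp0 : 0 < p := by linarith
  have hT : MeasurableSet T := by measurability
  have inner (s : ℝ) : ∫⁻ t, T.indicator K (s, t) =
      (Ico x y).indicator (fun s => ENNReal.ofReal (p * (y - s) ^ (p - 1))) s := by
    by_cases hs : s ∈ Ico x y
    · have hslice : (fun t => T.indicator K (s, t)) = (Ioo s y).indicator fun t => K (s, t) := by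
        ext t
        simp only [indicator, T, mem_ofPred_eq, mem_Ioo, hs.1, true_and]
      have hK (t : ℝ) : K (s, t) =
          ENNReal.ofReal p * ENNReal.ofReal ((p - 1) * (t - s) ^ (p - 1 - 1)) := by
        rw [← ENNReal.ofReal_mul hp0.le, sub_sub, one_add_one_eq_two, ← mul_assoc]
      rw [indicator_of_mem hs, hslice, lintegral_indicator measurableSet_Ioo]
      simp only [hK]
      rw [lintegral_const_mul _ (by fun_prop),
        lintegral_Ioo_ofReal_mul_sub_rpow hs.2.le (sub_pos.2 hp), ← ENNReal.ofReal_mul hp0.le]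
    · have hslice (t : ℝ) : T.indicator K (s, t) = 0 :=
        indicator_of_notMem (fun h => hs ⟨h.1, h.2.1.trans h.2.2⟩) _
      simp only [indicator_of_notMem hs, hslice, lintegral_zero]
  rw [withDensity_apply _ (measurableSet_setOf_mem_crossing _),
    Measure.restrict_restrict (measurableSet_setOf_mem_crossing _),
    setOf_mem_crossing_inter_setOf_lt hxy, ← lintegral_indicator hT, Measure.volume_eq_prod,
    lintegral_prod _ (((by fun_prop : Measurable K).indicator hT).aemeasurable)]
  simp only [inner]
  rw [lintegral_indicator measurableSet_Ico, setLIntegral_congr Ioo_ae_eq_Ico.symm,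
    lintegral_Ioo_ofReal_mul_rsub_rpow hxy hp0]

lemma exists_measure_setOf_mem_crossing_eq_rpow {p : ℝ} (hp : 1 ≤ p) :
    ∃ m : Measure (ℝ × ℝ), SFinite m ∧ (∀ᵐ st ∂m, st.1 ≤ st.2) ∧
      ∀ q : ℝ × ℝ, m {st | q ∈ crossing st.1 st.2} = ENNReal.ofReal (|q.1 - q.2| ^ p) := by
  suffices ∃ m : Measure (ℝ × ℝ), SFinite m ∧ (∀ᵐ st ∂m, st.1 ≤ st.2) ∧ ∀ x y, x ≤ y →
      m {st | (x, y) ∈ crossing st.1 st.2} = ENNReal.ofReal ((y - x) ^ p) by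
    obtain ⟨m, hm, hle, h⟩ := this
    refine ⟨m, hm, hle, fun ⟨x, y⟩ => ?_⟩
    rcases le_total x y with hxy | hxy
    · rw [h x y hxy, abs_sub_comm, abs_of_nonneg (sub_nonneg.2 hxy)]
    · simp_rw [← swap_mem_crossing (q := (x, y)), Prod.swap_prod_mk]
      rw [h y x hxy, abs_of_nonneg (sub_nonneg.2 hxy)]
  rcases hp.eq_or_lt with rfl | hp
  · refine ⟨volume.map fun s => (s, s), inferInstance, ?_, fun x y hxy => ?_⟩
    · rw [ae_map_iff (by fun_prop) (measurableSet_le measurable_fst measurable_snd)]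
      exact ae_of_all _ fun _ => le_rfl
    · rw [Real.rpow_one, map_diag_volume_setOf_mem_crossing hxy]
  · refine ⟨_, inferInstance, ?_, fun x y hxy => withDensity_setOf_mem_crossing hp hxy⟩
    have hlt : ∀ᵐ st ∂volume.restrict {st : ℝ × ℝ | st.1 < st.2}, st.1 < st.2 :=
      ae_restrict_mem (measurableSet_lt measurable_fst measurable_snd)
    exact (withDensity_absolutelyContinuous _ _).ae_le (hlt.mono fun _ => le_of_lt)

theorem Wpp_eq_lintegral_quantile {p : ℝ} (hp : 1 ≤ p) (μ ν : Measure ℝ) [IsProbabilityMeasure μ]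
    [IsProbabilityMeasure ν] :
    Wpp p μ ν = ∫⁻ z in Ioo 0 1, ENNReal.ofReal (|quantile μ z - quantile ν z| ^ p) := by
  obtain ⟨m, _, hm, hcost⟩ := exists_measure_setOf_mem_crossing_eq_rpow hp
  simp_rw [← Real.dist_eq] at hcost ⊢
  rw [Wpp, ← lintegral_quantileCoupling μ ν (c := fun q => ENNReal.ofReal (dist q.1 q.2 ^ p))
    (by fun_prop)]
  exact le_antisymm (iInf₂_le _ (quantileCoupling_mem_couplings μ ν))
    (le_iInf₂ fun π hπ => lintegral_quantileCoupling_le m hm hcost hπ)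

theorem stmt16_general (p : ℝ) (hp : 1 ≤ p) (μ ν : Measure ℝ)
    [IsProbabilityMeasure μ] [IsProbabilityMeasure ν] :
    Wp p μ ν
      = (∫⁻ z in Set.Ioo (0 : ℝ) 1,
          ENNReal.ofReal (|quantile μ z - quantile ν z| ^ p)) ^ (1 / p) := by
  rw [Wp, Wpp_eq_lintegral_quantile hp]

theorem stmt16 (p : ℝ) (hp : 1 ≤ p) (μ ν : Measure ℝ)
    [IsProbabilityMeasure μ] [IsProbabilityMeasure ν]
    (hμ : ∫⁻ x, ENNReal.ofReal (|x| ^ p) ∂μ < ⊤) (hν : ∫⁻ x, ENNReal.ofReal (|x| ^ p) ∂ν < ⊤) :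
    Wp p μ ν
      = (∫⁻ z in Set.Ioo (0 : ℝ) 1,
          ENNReal.ofReal (|quantile μ z - quantile ν z| ^ p)) ^ (1 / p) :=
  stmt16_general p hp μ ν
end
end
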